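/- arXiv:2305.04907 — 4 statements merged into one kernel-verified Lean document; each statement's English description precedes it below -/
import Mathlib

section
/- If S is a blocking semioval with exactly 25 points in PG(2,11), then no line of PG(2,11) meets S in exactly 7, 8, 9, or 11 points. -/
instance : Fact (Nat.Prime 11) := ⟨by norm_num⟩

/-- The points of `PG(2,11)`: the projectivization of `(ZMod 11)^3`. -/
abbrev PGPoint : Type := Projectivization (ZMod 11) (Fin 3 → ZMod 11)

/-- The lines of `PG(2,11)`: the 2-dimensional subspaces of `(ZMod 11)^3`. -/
abbrev PGLine : Type :=
  {W : Submodule (ZMod 11) (Fin 3 → ZMod 11) // Module.finrank (ZMod 11) W = 2}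

/-- Incidence: a point lies on a line when its representing 1-dimensional
subspace is contained in the line's 2-dimensional subspace. -/
def PGmem (P : PGPoint) (L : PGLine) : Prop := Projectivization.submodule P ≤ L.val

/-- The set of points lying on a line. -/
def linePts (L : PGLine) : Set PGPoint := {P | PGmem P L}

/-- The set of points of `S` lying on the line `L`. -/
def secantPts (S : Set PGPoint) (L : PGLine) : Set PGPoint := {P ∈ S | PGmem P L}

/-- A line is a `k`-secant to `S` if it meets `S` in exactly `k` points. -/
def IsSecant (S : Set PGPoint) (k : ℕ) (L : PGLine) : Prop := (secantPts S L).ncard = k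

/-- A tangent line to `S` is a 1-secant. -/
def IsTangent (S : Set PGPoint) (L : PGLine) : Prop := IsSecant S 1 L

/-- A blocking set: every line meets `S`, but `S` contains no line. -/
def IsBlockingSet (S : Set PGPoint) : Prop :=
  (∀ L : PGLine, (secantPts S L).Nonempty) ∧ ∀ L : PGLine, ¬ linePts L ⊆ S

/-- A semioval: every point of `S` lies on exactly one tangent line to `S`. -/
def IsSemioval (S : Set PGPoint) : Prop :=
  ∀ P ∈ S, ∃! L : PGLine, PGmem P L ∧ IsTangent S L

/-- A blocking semioval is both a blocking set and a semioval. -/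
def IsBlockingSemioval (S : Set PGPoint) : Prop := IsBlockingSet S ∧ IsSemioval S

/-!
Let `L` be a `k`-secant with `k ≥ 2`. A semioval has as many tangents as points, here 25, and
each of them meets `L` (which is not a tangent) in exactly one point. The `k` points of `S ∩ L`
lie on one tangent each, so the `12 - k` points of `L \ S` carry the remaining `25 - k`
tangents. For such a point `Q`, the eleven lines through `Q` other than `L` partition the
`25 - k` points of `S \ L`; each of them meets `S`, in at least two points unless it is a
tangent, so `Q` lies on at least `k - 3` and at most eleven tangents. Hence
`(12 - k) (k - 3) ≤ 25 - k ≤ 11 (12 - k)`, which fails for `k = 7, 8, 9, 11`.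
-/

open Module Projectivization Finset

namespace Submodule

variable {k V : Type*} [DivisionRing k] [AddCommGroup V] [Module k V]

theorem finrank_sup_eq_two_of_ne {p q : Submodule k V} (hp : finrank k p = 1)
    (hq : finrank k q = 1) (hpq : p ≠ q) : finrank k ↥(p ⊔ q) = 2 := by
  have : FiniteDimensional k p := Module.finite_of_finrank_eq_succ hp
  have : FiniteDimensional k q := Module.finite_of_finrank_eq_succ hq
  have hinf : finrank k ↥(p ⊓ q) < finrank k p := by
    refine Submodule.finrank_lt_finrank_of_lt (inf_le_left.lt_of_ne fun h => hpq ?_)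
    exact eq_of_le_of_finrank_eq (h ▸ inf_le_right) (hp.trans hq.symm)
  have := finrank_sup_add_finrank_inf_eq p q
  omega

theorem finrank_inf_eq_one_of_ne [FiniteDimensional k V] (hV : finrank k V = 3)
    {p q : Submodule k V} (hp : finrank k p = 2) (hq : finrank k q = 2) (hpq : p ≠ q) :
    finrank k ↥(p ⊓ q) = 1 := by
  have hsup : finrank k p < finrank k ↥(p ⊔ q) := by
    refine Submodule.finrank_lt_finrank_of_lt (le_sup_left.lt_of_ne fun h => hpq ?_)
    exact (eq_of_le_of_finrank_eq (h ▸ le_sup_right) (hq.trans hp.symm)).symm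
  have := finrank_sup_add_finrank_inf_eq p q
  have := hV ▸ (p ⊔ q).finrank_le
  omega

end Submodule

namespace Projectivization

variable {k V : Type*} [DivisionRing k] [AddCommGroup V] [Module k V]

theorem range_map_subtype (W : Submodule k V) :
    Set.range (map (σ := RingHom.id k) W.subtype W.injective_subtype) = {x | x.submodule ≤ W} := by
  ext x
  induction x using Projectivization.ind with | h v hv => ?_
  simp only [Set.mem_range, Set.mem_ofPred_eq, submodule_mk, Submodule.span_singleton_le_iff_mem]
  constructor
  · rintro ⟨y, hy⟩
    induction y using Projectivization.ind with | h w hw => ?_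
    rw [map_mk, mk_eq_mk_iff] at hy
    obtain ⟨a, ha⟩ := hy
    exact (W.smul_mem_iff' a).mp (ha ▸ w.2)
  · intro hvW
    exact ⟨mk k ⟨v, hvW⟩ (by simpa using hv), map_mk _ _ _ _⟩

end Projectivization

theorem Finset.card_eq_sum_card_bipartiteBelow {α β : Type*} {r : α → β → Prop}
    [∀ a b, Decidable (r a b)] {s : Finset α} {t : Finset β} (h : ∀ a ∈ s, ∃! b, b ∈ t ∧ r a b) :
    #s = ∑ b ∈ t, #(s.bipartiteBelow r b) := by
  rw [← sum_card_bipartiteAbove_eq_sum_card_bipartiteBelow, card_eq_sum_ones]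
  refine sum_congr rfl fun a ha => (card_eq_one_iff_existsUnique.mpr ?_).symm
  simpa only [mem_bipartiteAbove] using h a ha

open scoped Classical

noncomputable instance : Fintype PGPoint := Fintype.ofFinite _

noncomputable instance : Fintype PGLine := Fintype.ofFinite _

noncomputable def pointsOn (L : PGLine) : Finset PGPoint := {P | PGmem P L}

noncomputable def linesThrough (P : PGPoint) : Finset PGLine := {L | PGmem P L}

@[simp] theorem mem_pointsOn {P : PGPoint} {L : PGLine} : P ∈ pointsOn L ↔ PGmem P L := by
  simp [pointsOn]

@[simp] theorem mem_linesThrough {P : PGPoint} {L : PGLine} : L ∈ linesThrough P ↔ PGmem P L := by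
  simp [linesThrough]

theorem existsUnique_line_through {P Q : PGPoint} (hPQ : P ≠ Q) :
    ∃! L : PGLine, PGmem P L ∧ PGmem Q L := by
  have hne : P.submodule ≠ Q.submodule := fun h => hPQ (submodule_injective h)
  refine ⟨⟨_, Submodule.finrank_sup_eq_two_of_ne P.finrank_submodule Q.finrank_submodule hne⟩,
    ⟨le_sup_left, le_sup_right⟩, fun L ⟨hP, hQ⟩ => Subtype.ext ?_⟩
  exact (Submodule.eq_of_le_of_finrank_eq (sup_le hP hQ) (by
    rw [L.2, Submodule.finrank_sup_eq_two_of_ne P.finrank_submodule Q.finrank_submodule hne])).symm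

theorem existsUnique_inter {L M : PGLine} (hLM : L ≠ M) :
    ∃! P : PGPoint, PGmem P L ∧ PGmem P M := by
  have hrk := Submodule.finrank_inf_eq_one_of_ne (by simp) L.2 M.2 (Subtype.coe_ne_coe.mpr hLM)
  refine ⟨mk'' _ hrk, ?_, fun P ⟨hL, hM⟩ => submodule_injective ?_⟩
  · simp [PGmem, submodule_mk'']
  · rw [submodule_mk'']
    exact Submodule.eq_of_le_of_finrank_eq (le_inf hL hM) (by rw [finrank_submodule, hrk])

theorem card_pointsOn (L : PGLine) : #(pointsOn L) = 12 := by
  have h := Set.ncard_range_of_injective (map_injective (σ := RingHom.id (ZMod 11))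
    L.1.subtype L.1.injective_subtype)
  rw [range_map_subtype, card_of_finrank_two _ _ L.2, Nat.card_zmod] at h
  rw [← Set.ncard_coe_finset]
  convert h using 2
  ext P
  simp [PGmem]

theorem card_PGPoint : Fintype.card PGPoint = 133 := by
  rw [← Nat.card_eq_fintype_card, card_of_finrank (ZMod 11) _ (n := 3) (by simp)]
  simp [Finset.sum_range_succ]

theorem ncard_secantPts (S : Set PGPoint) (L : PGLine) :
    (secantPts S L).ncard = #(S.toFinset.bipartiteBelow PGmem L) := by
  rw [← Set.ncard_coe_finset]
  congr 1
  ext P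
  simp [secantPts]

theorem ncard_eq_sum_ncard_secantPts {S : Set PGPoint} {Q : PGPoint} (hQ : Q ∉ S) :
    S.ncard = ∑ M ∈ linesThrough Q, (secantPts S M).ncard := by
  simp_rw [ncard_secantPts, Set.ncard_eq_toFinset_card']
  refine card_eq_sum_card_bipartiteBelow fun P hP => ?_
  have hPQ : P ≠ Q := fun h => hQ (h ▸ Set.mem_toFinset.mp hP)
  simpa only [mem_linesThrough, and_comm] using existsUnique_line_through hPQ

theorem card_eq_sum_card_fiberwise_pointsOn {T : Finset PGLine} {L : PGLine} (hL : L ∉ T) :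
    #T = ∑ P ∈ pointsOn L, #{M ∈ T | PGmem P M} := by
  refine card_eq_sum_card_bipartiteBelow (r := fun M P => PGmem P M) fun M hM => ?_
  have hLM : L ≠ M := fun h => hL (h ▸ hM)
  simpa only [mem_pointsOn] using existsUnique_inter hLM

/-- The lines through `Q` partition the other 132 points, eleven on each. -/
theorem card_linesThrough (Q : PGPoint) : #(linesThrough Q) = 12 := by
  have h := ncard_eq_sum_ncard_secantPts (S := {Q}ᶜ) (Q := Q) (by simp)
  have hline : ∀ M ∈ linesThrough Q, (secantPts {Q}ᶜ M).ncard = 11 := by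
    intro M hM
    have : secantPts {Q}ᶜ M = ((pointsOn M).erase Q : Finset PGPoint) := by
      ext P
      simp [secantPts, and_comm]
    rw [this, Set.ncard_coe_finset, card_erase_of_mem (by simpa using hM), card_pointsOn]
  rw [sum_congr rfl hline, sum_const, smul_eq_mul, Set.ncard_compl, Set.ncard_singleton,
    Nat.card_eq_fintype_card, card_PGPoint] at h
  omega

noncomputable def tangents (S : Set PGPoint) : Finset PGLine := {M | IsTangent S M}

noncomputable def tangentsThrough (S : Set PGPoint) (P : PGPoint) : Finset PGLine :=
  {M ∈ tangents S | PGmem P M}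

theorem IsSemioval.card_tangents {S : Set PGPoint} (hS : IsSemioval S) :
    #(tangents S) = S.ncard := by
  have hcount := card_eq_sum_card_bipartiteBelow (r := PGmem) (t := tangents S)
    (s := S.toFinset) fun P hP => by
      simpa [tangents, and_comm] using hS P (Set.mem_toFinset.mp hP)
  rw [Set.ncard_eq_toFinset_card', hcount, card_eq_sum_ones]
  refine sum_congr rfl fun M hM => ?_
  rw [← ncard_secantPts]
  exact ((mem_filter.mp hM).2 : _ = 1).symm

theorem IsSemioval.card_tangentsThrough {S : Set PGPoint} (hS : IsSemioval S) {P : PGPoint}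
    (hP : P ∈ S) : #(tangentsThrough S P) = 1 :=
  card_eq_one_iff_existsUnique.mpr (by simpa [tangentsThrough, tangents, and_comm] using hS P hP)

/-- Each of the twelve lines through `Q` meets `S`, in at least two points unless it is a
tangent. -/
theorem add_ncard_secantPts_le {S : Set PGPoint} (hS : ∀ M : PGLine, (secantPts S M).Nonempty)
    {Q : PGPoint} (hQ : Q ∉ S) {L : PGLine} (hQL : PGmem Q L) :
    22 + (secantPts S L).ncard ≤ S.ncard + #(tangentsThrough S Q) := by
  set g : PGLine → ℕ := fun M => (secantPts S M).ncard + if IsTangent S M then 1 else 0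
  have hg : ∀ M, 2 ≤ g M := by
    intro M
    have := (Set.ncard_pos (Set.toFinite _)).mpr (hS M)
    by_cases hM : IsTangent S M
    · simp only [g, hM, if_true]
      omega
    · have : (secantPts S M).ncard ≠ 1 := hM
      simp only [g, hM, if_false]
      omega
  have hsum : ∑ M ∈ linesThrough Q, g M = S.ncard + #(tangentsThrough S Q) := by
    rw [sum_add_distrib, ← ncard_eq_sum_ncard_secantPts hQ, sum_boole, Nat.cast_id]
    congr 2
    ext M
    simp [tangentsThrough, tangents, and_comm]
  have hrest : 11 * 2 ≤ ∑ M ∈ (linesThrough Q).erase L, g M := by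
    have := card_nsmul_le_sum ((linesThrough Q).erase L) g 2 fun M _ => hg M
    rwa [card_erase_of_mem (by simpa using hQL), card_linesThrough, smul_eq_mul] at this
  rw [← add_sum_erase _ _ (by simpa using hQL)] at hsum
  have : (secantPts S L).ncard ≤ g L := Nat.le_add_right _ _
  omega

theorem card_tangentsThrough_le {S : Set PGPoint} {L : PGLine} (hL : ¬ IsTangent S L)
    {Q : PGPoint} (hQL : PGmem Q L) : #(tangentsThrough S Q) ≤ 11 := by
  have hsub : tangentsThrough S Q ⊆ (linesThrough Q).erase L := by
    intro M hM
    simp only [tangentsThrough, tangents, mem_filter, mem_univ, true_and] at hM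
    exact mem_erase.mpr ⟨fun h => hL (h ▸ hM.1), by simpa using hM.2⟩
  simpa [card_erase_of_mem (by simpa using hQL : L ∈ linesThrough Q), card_linesThrough]
    using card_le_card hsub

theorem IsBlockingSemioval.tangent_count_bounds {S : Set PGPoint} (hS : IsBlockingSemioval S)
    {k : ℕ} {L : PGLine} (hL : IsSecant S k L) (hk : 2 ≤ k) :
    ∃ t, S.ncard = k + t ∧ (12 - k) * (22 + k) ≤ (12 - k) * S.ncard + t ∧ t ≤ (12 - k) * 11 := by
  have hLt : ¬ IsTangent S L := fun h => by
    have : k = 1 := hL.symm.trans h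
    omega
  have hin : #{P ∈ pointsOn L | P ∈ S} = k := by
    rw [← hL, ← Set.ncard_coe_finset]
    congr 1
    ext P
    simp [secantPts, and_comm]
  have hout : #{P ∈ pointsOn L | P ∉ S} = 12 - k := by
    have := card_filter_add_card_filter_not (s := pointsOn L) (· ∈ S)
    rw [hin, card_pointsOn] at this
    omega
  have hoff : ∀ P ∈ {P ∈ pointsOn L | P ∉ S}, PGmem P L ∧ P ∉ S := by simp
  refine ⟨∑ P ∈ pointsOn L with P ∉ S, #(tangentsThrough S P), ?_, ?_, ?_⟩
  · have hsplit := sum_filter_add_sum_filter_not (pointsOn L) (· ∈ S)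
      fun P => #(tangentsThrough S P)
    rw [sum_congr rfl fun P hP => hS.2.card_tangentsThrough (mem_filter.mp hP).2,
      sum_const, smul_eq_mul, mul_one, hin] at hsplit
    rw [← hS.2.card_tangents, card_eq_sum_card_fiberwise_pointsOn (by simpa [tangents] using hLt)]
    exact hsplit.symm
  · have := sum_le_sum fun P hP => add_ncard_secantPts_le hS.1.1 (hoff P hP).2 (hoff P hP).1
    rwa [sum_const, sum_add_distrib, sum_const, hL, hout, smul_eq_mul, smul_eq_mul] at this
  · have := sum_le_card_nsmul _ _ 11 fun P hP =>
      card_tangentsThrough_le hLt (hoff P hP).1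
    rwa [hout, smul_eq_mul] at this

theorem no_7_8_9_11_secants (S : Set PGPoint) (hS : IsBlockingSemioval S) (hcard : S.ncard = 25) (L : PGLine) :
    ¬ IsSecant S 7 L ∧ ¬ IsSecant S 8 L ∧ ¬ IsSecant S 9 L ∧ ¬ IsSecant S 11 L := by
  refine ⟨fun h => ?_, fun h => ?_, fun h => ?_, fun h => ?_⟩ <;>
  · obtain ⟨t, ht, hlow, hup⟩ := hS.tangent_count_bounds h (by norm_num)
    rw [hcard] at ht hlow
    omega
end

section
/- Let S be a blocking semioval with exactly 25 points in PG(2,11) having a 10-secant line ℓ, let Q and R be the two points of ℓ not in S, and let S_R be the set of points of S not on ℓ whose unique tangent line to S passes through R. Then every line through Q other than ℓ that contains a point of S_R contains at least two points of S_R. -/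
/-!
The line `m` is not a tangent: the tangent at a point of `S_R` on `m` passes through `R`, so if
it were `m`, then `m` would be the line `QR = ℓ`. As `S` is blocking, it therefore meets `m` at
least twice, and it remains to see that every point `X` of `S` on `m` lies in `S_R`. Such an `X`
is off `ℓ`, since `m` meets `ℓ` only in `Q ∉ S`. Its tangent `t` meets `ℓ` outside `S`, as `X` is
the only point of `S` on `t`; and the only points of `ℓ` outside `S` are `Q` and `R`, because `ℓ`
has `12` points, `10` of them in `S`. Finally `t` cannot pass through `Q`, for then `t = m`.
-/

open Projectivization

namespace PG

lemma pgmem_mk_iff {v : Fin 3 → ZMod 11} (hv : v ≠ 0) {L : PGLine} :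
    PGmem (mk (ZMod 11) v hv) L ↔ v ∈ L.val := by
  rw [PGmem, submodule_mk, Submodule.span_singleton_le_iff_mem]

lemma line_eq_sup_of_mem {P P' : PGPoint} (h : P ≠ P') {L : PGLine}
    (hP : PGmem P L) (hP' : PGmem P' L) : L.val = P.submodule ⊔ P'.submodule := by
  have hlt : P.submodule < P.submodule ⊔ P'.submodule := by
    refine lt_of_le_of_ne le_sup_left fun heq => h (submodule_injective ?_)
    exact (Submodule.eq_of_le_of_finrank_eq (heq ▸ le_sup_right)
      (by rw [P.finrank_submodule, P'.finrank_submodule])).symm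
  have h2 : 2 ≤ Module.finrank (ZMod 11) ↥(P.submodule ⊔ P'.submodule) := by
    have := Submodule.finrank_lt_finrank_of_lt hlt
    rwa [P.finrank_submodule] at this
  exact (Submodule.eq_of_le_of_finrank_le (sup_le hP hP') (by rw [L.2]; exact h2)).symm

lemma line_eq_of_mem_of_mem {P P' : PGPoint} (h : P ≠ P') {L₁ L₂ : PGLine}
    (h₁ : PGmem P L₁) (h₁' : PGmem P' L₁) (h₂ : PGmem P L₂) (h₂' : PGmem P' L₂) :
    L₁ = L₂ :=
  Subtype.ext ((line_eq_sup_of_mem h h₁ h₁').trans (line_eq_sup_of_mem h h₂ h₂').symm)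

lemma exists_mem_mem (L₁ L₂ : PGLine) : ∃ P : PGPoint, PGmem P L₁ ∧ PGmem P L₂ := by
  have hsup : Module.finrank (ZMod 11) ↥(L₁.val ⊔ L₂.val) ≤ 3 := by
    simpa using Submodule.finrank_le (L₁.val ⊔ L₂.val)
  have hdim := Submodule.finrank_sup_add_finrank_inf_eq L₁.val L₂.val
  rw [L₁.2, L₂.2] at hdim
  have hinf : L₁.val ⊓ L₂.val ≠ ⊥ := Submodule.one_le_finrank_iff.mp (by omega)
  obtain ⟨v, ⟨hv₁, hv₂⟩, hv⟩ := Submodule.exists_mem_ne_zero_of_ne_bot hinf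
  exact ⟨mk _ v hv, (pgmem_mk_iff hv).mpr hv₁, (pgmem_mk_iff hv).mpr hv₂⟩

lemma linePts_eq_range_map (L : PGLine) :
    linePts L = Set.range (map L.val.subtype L.val.injective_subtype) := by
  ext P
  constructor
  · intro hP
    have hrep : P.rep ∈ L.val := by
      rwa [← pgmem_mk_iff P.rep_nonzero, mk_rep]
    refine ⟨mk _ ⟨P.rep, hrep⟩ fun h => P.rep_nonzero (congrArg Subtype.val h), ?_⟩
    exact (map_mk _ _ _ _).trans (mk_rep P)
  · rintro ⟨P', rfl⟩
    induction P' using Projectivization.ind with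
    | h v hv => exact (pgmem_mk_iff _).mpr (by simp)

lemma ncard_linePts (L : PGLine) : (linePts L).ncard = 12 := by
  rw [linePts_eq_range_map, Set.ncard_range_of_injective (map_injective _ _),
    card_of_finrank_two _ _ L.2, Nat.card_zmod]

lemma eq_or_eq_of_isSecant_ten {S : Set PGPoint} {ℓ : PGLine} (hℓ : IsSecant S 10 ℓ)
    {Q R : PGPoint} (hQR : Q ≠ R) (hQℓ : PGmem Q ℓ) (hRℓ : PGmem R ℓ) (hQS : Q ∉ S)
    (hRS : R ∉ S) {Y : PGPoint} (hYℓ : PGmem Y ℓ) (hYS : Y ∉ S) : Y = Q ∨ Y = R := by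
  have hR : R ∉ secantPts S ℓ := fun h => hRS h.1
  have hQ : Q ∉ insert R (secantPts S ℓ) := by
    rintro (rfl | h)
    · exact hQR rfl
    · exact hQS h.1
  have hfill : insert Q (insert R (secantPts S ℓ)) = linePts ℓ := by
    refine Set.eq_of_subset_of_ncard_le ?_ ?_ (Set.toFinite _)
    · rintro X (rfl | rfl | hX)
      exacts [hQℓ, hRℓ, hX.2]
    · rw [ncard_linePts, Set.ncard_insert_of_notMem hQ (Set.toFinite _),
        Set.ncard_insert_of_notMem hR (Set.toFinite _), hℓ]
  have hY : Y ∈ insert Q (insert R (secantPts S ℓ)) := hfill ▸ hYℓ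
  rcases hY with hY | hY | hY
  exacts [Or.inl hY, Or.inr hY, absurd hY.1 hYS]

end PG

lemma IsTangent.eq_of_mem {S : Set PGPoint} {L : PGLine} (h : IsTangent S L) {X Y : PGPoint}
    (hX : X ∈ S) (hXL : PGmem X L) (hY : Y ∈ S) (hYL : PGmem Y L) : X = Y := by
  obtain ⟨a, ha⟩ := Set.ncard_eq_one.mp h
  have hXa : X ∈ ({a} : Set PGPoint) := ha ▸ ⟨hX, hXL⟩
  have hYa : Y ∈ ({a} : Set PGPoint) := ha ▸ ⟨hY, hYL⟩
  exact hXa.trans hYa.symm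

lemma IsSemioval.tangent_unique {S : Set PGPoint} (h : IsSemioval S) {P : PGPoint} (hP : P ∈ S)
    {t₁ t₂ : PGLine} (hP₁ : PGmem P t₁) (ht₁ : IsTangent S t₁) (hP₂ : PGmem P t₂)
    (ht₂ : IsTangent S t₂) : t₁ = t₂ :=
  (h P hP).unique ⟨hP₁, ht₁⟩ ⟨hP₂, ht₂⟩

lemma IsBlockingSet.two_le_ncard_secantPts {S : Set PGPoint} (h : IsBlockingSet S) {L : PGLine}
    (hL : ¬ IsTangent S L) : 2 ≤ (secantPts S L).ncard := by
  have hpos : 0 < (secantPts S L).ncard := (Set.ncard_pos (Set.toFinite _)).mpr (h.1 L)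
  have hne : (secantPts S L).ncard ≠ 1 := hL
  omega

theorem lines_through_Q_meet_SR_twice_general (S : Set PGPoint) (hS : IsBlockingSemioval S)
    (ℓ : PGLine) (hℓ : IsSecant S 10 ℓ)
    (Q R : PGPoint) (hQR : Q ≠ R)
    (hQℓ : PGmem Q ℓ) (hRℓ : PGmem R ℓ) (hQS : Q ∉ S) (hRS : R ∉ S)
    (SR : Set PGPoint)
    (hSR : SR = {P | P ∈ S ∧ ¬ PGmem P ℓ ∧ ∃ t : PGLine, PGmem P t ∧ IsTangent S t ∧ PGmem R t})
    (m : PGLine) (hQm : PGmem Q m) (hmℓ : m ≠ ℓ)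
    (hmeets : ∃ P ∈ SR, PGmem P m) :
    2 ≤ ({P ∈ SR | PGmem P m}).ncard := by
  subst hSR
  obtain ⟨P₀, ⟨hP₀S, -, t₀, hP₀t₀, ht₀, hRt₀⟩, hP₀m⟩ := hmeets
  have hm : ¬ IsTangent S m := fun hm => hmℓ <|
    PG.line_eq_of_mem_of_mem hQR hQm (hS.2.tangent_unique hP₀S hP₀m hm hP₀t₀ ht₀ ▸ hRt₀) hQℓ hRℓ
  refine (hS.1.two_le_ncard_secantPts hm).trans (Set.ncard_le_ncard ?_ (Set.toFinite _))
  rintro X ⟨hXS, hXm⟩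
  have hXQ : X ≠ Q := ne_of_mem_of_not_mem hXS hQS
  have hXℓ : ¬ PGmem X ℓ := fun hXℓ => hmℓ (PG.line_eq_of_mem_of_mem hXQ hXm hQm hXℓ hQℓ)
  obtain ⟨t, ⟨hXt, ht⟩, -⟩ := hS.2 X hXS
  obtain ⟨Y, hYt, hYℓ⟩ := PG.exists_mem_mem t ℓ
  have hYS : Y ∉ S := fun hYS => hXℓ (ht.eq_of_mem hXS hXt hYS hYt ▸ hYℓ)
  rcases PG.eq_or_eq_of_isSecant_ten hℓ hQR hQℓ hRℓ hQS hRS hYℓ hYS with rfl | rfl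
  · exact absurd (PG.line_eq_of_mem_of_mem hXQ hXt hYt hXm hQm ▸ ht) hm
  · exact ⟨⟨hXS, hXℓ, t, hXt, ht, hYt⟩, hXm⟩

theorem lines_through_Q_meet_SR_twice (S : Set PGPoint) (hS : IsBlockingSemioval S) (hcard : S.ncard = 25)
    (ℓ : PGLine) (hℓ : IsSecant S 10 ℓ)
    (Q R : PGPoint) (hQR : Q ≠ R)
    (hQℓ : PGmem Q ℓ) (hRℓ : PGmem R ℓ) (hQS : Q ∉ S) (hRS : R ∉ S)
    (SR : Set PGPoint)
    (hSR : SR = {P | P ∈ S ∧ ¬ PGmem P ℓ ∧ ∃ t : PGLine, PGmem P t ∧ IsTangent S t ∧ PGmem R t})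
    (m : PGLine) (hQm : PGmem Q m) (hmℓ : m ≠ ℓ)
    (hmeets : ∃ P ∈ SR, PGmem P m) :
    2 ≤ ({P ∈ SR | PGmem P m}).ncard :=
  lines_through_Q_meet_SR_twice_general S hS ℓ hℓ Q R hQR hQℓ hRℓ hQS hRS SR hSR m hQm hmℓ hmeets
end

section
/- Let S be a blocking semioval with exactly 25 points in PG(2,11) having a 10-secant line ℓ, let Q and R be the two points of ℓ not in S, let S_Q (respectively S_R) be the set of points of S not on ℓ whose unique tangent line to S passes through Q (respectively R), and suppose |S_Q| = 8 and |S_R| = 7. Then the twelve lines through Q consist of ℓ, eight tangent lines to S, two 2-secants to S and one 3-secant to S; and the twelve lines through R consist of ℓ, seven tangent lines to S and four 2-secants to S. -/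
/-! The twelve lines through a point `X ∈ ℓ \ S` partition `S`, so the eleven of them other than
`ℓ` carry the `15` points of `S \ ℓ`. The tangents among them are exactly the tangents at the
points of `S_X`, and every other one meets `S` at least twice because `S` is blocking. With
`k = |S_X|` tangents, the remaining `11 - k` lines carry `15 - k` points, an excess of `k - 7` over
two points per line: one 3-secant and otherwise 2-secants for `k = 8`, only 2-secants for
`k = 7`. -/

open Module Projectivization Finset
open scoped LinearAlgebra.Projectivization

namespace Projectivization

variable {K V : Type*} [Field K] [AddCommGroup V] [Module K V]

theorem eq_of_submodule_le {P P' : ℙ K V} (h : P.submodule ≤ P'.submodule) : P = P' :=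
  submodule_injective <|
    Submodule.eq_of_le_of_finrank_eq h (by rw [finrank_submodule, finrank_submodule])

theorem finrank_sup_submodule_of_ne {P P' : ℙ K V} (h : P ≠ P') :
    finrank K ↥(P.submodule ⊔ P'.submodule) = 2 := by
  have hlt : P.submodule ⊓ P'.submodule < P.submodule :=
    inf_le_left.lt_of_ne fun heq => h (eq_of_submodule_le (heq ▸ inf_le_right))
  have hinf := Submodule.finrank_lt_finrank_of_lt hlt
  have hsum := Submodule.finrank_sup_add_finrank_inf_eq P.submodule P'.submodule
  rw [finrank_submodule] at hinf
  rw [finrank_submodule, finrank_submodule] at hsum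
  omega

end Projectivization

namespace Submodule

variable {K V : Type*} [Field K] [AddCommGroup V] [Module K V] [FiniteDimensional K V]

theorem finrank_map_mkQ_add_finrank {p W : Submodule K V} (h : p ≤ W) :
    finrank K (W.map p.mkQ) + finrank K p = finrank K W := by
  have h₁ := (quotientQuotientEquivQuotient p W h).finrank_eq
  have h₂ := (W.map p.mkQ).finrank_quotient_add_finrank
  have h₃ := p.finrank_quotient_add_finrank
  have h₄ := W.finrank_quotient_add_finrank
  omega

theorem card_ge_finrank_succ_eq_card_projectivization [Finite K] (p : Submodule K V) :
    Nat.card {W : Submodule K V // p ≤ W ∧ finrank K W = finrank K p + 1} =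
      Nat.card (ℙ K (V ⧸ p)) := by
  refine Nat.card_congr ?_
  refine (Equiv.subtypeSubtypeEquivSubtypeInter (· ∈ Set.Ici p)
    (fun W => finrank K W = finrank K p + 1)).symm.trans ?_
  refine ((comapMkQRelIso p).toEquiv.symm.subtypeEquiv fun W => ?_).trans
    (equivSubmodule K (V ⧸ p)).symm
  have := finrank_map_mkQ_add_finrank W.2
  change _ ↔ finrank K (W.1.map p.mkQ) = 1
  omega

end Submodule

section Excess

variable {α : Type*} {s : Finset α} {f : α → ℕ}

theorem sum_add_card_filter_eq_one (hf : ∀ x ∈ s, 1 ≤ f x) :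
    ∑ x ∈ s, f x + #{x ∈ s | f x = 1} = 2 * #s + ∑ x ∈ s, (f x - 2) := by
  rw [card_filter, ← sum_add_distrib, card_eq_sum_ones, mul_sum, ← sum_add_distrib]
  refine sum_congr rfl fun x hx => ?_
  have := hf x hx
  split_ifs <;> omega

-- `e` is the excess `∑ x ∈ s, (f x - 2)`, by `sum_add_card_filter_eq_one`.
theorem profile_of_excess_le_one (hf : ∀ x ∈ s, 1 ≤ f x) {e : ℕ}
    (hsum : ∑ x ∈ s, f x + #{x ∈ s | f x = 1} = 2 * #s + e) (he : e ≤ 1) :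
    (∀ x ∈ s, f x ≤ 2 + e) ∧ #{x ∈ s | f x = 3} = e ∧
      #{x ∈ s | f x = 1} + #{x ∈ s | f x = 2} + e = #s := by
  have hexcess : ∑ x ∈ s, (f x - 2) = e := by
    have := sum_add_card_filter_eq_one hf
    omega
  have hle : ∀ x ∈ s, f x ≤ 2 + e := fun x hx => by
    have := single_le_sum (fun y _ => Nat.zero_le (f y - 2)) hx
    omega
  have hval : ∀ x ∈ s, f x = 1 ∨ f x = 2 ∨ f x = 3 := fun x hx => by
    have := hf x hx
    have := hle x hx
    omega
  have hthree : #{x ∈ s | f x = 3} = e := by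
    rw [← hexcess, card_filter]
    refine sum_congr rfl fun x hx => ?_
    rcases hval x hx with h | h | h <;> simp [h]
  refine ⟨hle, hthree, ?_⟩
  rw [← hthree, card_filter, card_filter, card_filter, ← sum_add_distrib, ← sum_add_distrib,
    card_eq_sum_ones]
  refine sum_congr rfl fun x hx => ?_
  rcases hval x hx with h | h | h <;> simp [h]

end Excess

noncomputable instance inst_s5 : Fintype PGLine := Fintype.ofFinite _
noncomputable instance : DecidableEq PGLine := Classical.decEq _

def lineThrough (P P' : PGPoint) (h : P ≠ P') : PGLine :=
  ⟨P.submodule ⊔ P'.submodule, finrank_sup_submodule_of_ne h⟩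

theorem PGmem_lineThrough_left {P P' : PGPoint} (h : P ≠ P') : PGmem P (lineThrough P P' h) :=
  le_sup_left

theorem PGmem_lineThrough_right {P P' : PGPoint} (h : P ≠ P') : PGmem P' (lineThrough P P' h) :=
  le_sup_right

theorem eq_of_PGmem_of_PGmem {P P' : PGPoint} {m m' : PGLine} (h : P ≠ P')
    (hm : PGmem P m) (hm' : PGmem P' m) (hmm : PGmem P m') (hmm' : PGmem P' m') : m = m' := by
  have key : ∀ n : PGLine, PGmem P n → PGmem P' n → n = lineThrough P P' h := fun n hn hn' =>
    (Subtype.ext (Submodule.eq_of_le_of_finrank_eq (sup_le hn hn')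
      (by rw [n.2, (lineThrough P P' h).2]))).symm
  rw [key m hm hm', key m' hmm hmm']

open Classical in
noncomputable def pencil (X : PGPoint) : Finset PGLine := {m | PGmem X m}

theorem mem_pencil {X : PGPoint} {m : PGLine} : m ∈ pencil X ↔ PGmem X m := by
  simp [pencil]

theorem card_pencil (X : PGPoint) : #(pencil X) = 12 := by
  have hquot : finrank (ZMod 11) ((Fin 3 → ZMod 11) ⧸ X.submodule) = 2 := by
    have := X.submodule.finrank_quotient_add_finrank
    rw [finrank_submodule, finrank_fin_fun] at this
    omega
  have e : {m // m ∈ pencil X} ≃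
      {W : Submodule (ZMod 11) (Fin 3 → ZMod 11) // X.submodule ≤ W ∧
        finrank (ZMod 11) W = finrank (ZMod 11) X.submodule + 1} :=
    (Equiv.subtypeEquivRight fun _ => mem_pencil).trans <|
      (Equiv.subtypeSubtypeEquivSubtypeInter _ (fun W => X.submodule ≤ W)).trans <|
        Equiv.subtypeEquivRight fun W => by rw [finrank_submodule, and_comm]
  rw [← Nat.card_eq_finsetCard, Nat.card_congr e,
    Submodule.card_ge_finrank_succ_eq_card_projectivization, card_of_finrank_two _ _ hquot,
    Nat.card_zmod]

section Counting

variable {S : Set PGPoint} {X : PGPoint}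

theorem IsBlockingSet.one_le_ncard_secantPts (hS : IsBlockingSet S) (m : PGLine) :
    1 ≤ (secantPts S m).ncard :=
  (Set.ncard_pos (Set.toFinite _)).2 (hS.1 m)

theorem pairwiseDisjoint_secantPts_pencil (hX : X ∉ S) :
    (pencil X : Set PGLine).PairwiseDisjoint (secantPts S) := by
  intro m hm m' hm' hne
  refine Set.disjoint_left.2 fun P hP hP' => ?_
  have hPX : P ≠ X := fun h => hX (h ▸ hP.1)
  exact hne (eq_of_PGmem_of_PGmem hPX hP.2 (mem_pencil.1 hm) hP'.2 (mem_pencil.1 hm'))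

theorem ncard_biUnion_secantPts (hX : X ∉ S) {T : Finset PGLine} (hT : T ⊆ pencil X) :
    (⋃ m ∈ T, secantPts S m).ncard = ∑ m ∈ T, (secantPts S m).ncard := by
  rw [← Finset.set_biUnion_coe, Set.Finite.ncard_biUnion T.finite_toSet
    (fun _ _ => Set.toFinite _) ((pairwiseDisjoint_secantPts_pencil hX).subset hT),
    finsum_mem_coe_finset]

theorem biUnion_pencil_secantPts (hX : X ∉ S) : ⋃ m ∈ pencil X, secantPts S m = S := by
  refine Set.Subset.antisymm (Set.iUnion₂_subset fun _ _ P hP => hP.1) fun P hP => ?_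
  have hXP : X ≠ P := fun h => hX (h ▸ hP)
  exact Set.mem_biUnion (mem_pencil.2 (PGmem_lineThrough_left hXP))
    ⟨hP, PGmem_lineThrough_right hXP⟩

theorem sum_pencil_ncard_secantPts (hX : X ∉ S) :
    ∑ m ∈ pencil X, (secantPts S m).ncard = S.ncard := by
  rw [← ncard_biUnion_secantPts hX subset_rfl, biUnion_pencil_secantPts hX]

theorem ncard_setOf_PGmem (X : PGPoint) : {m | PGmem X m}.ncard = 12 := by
  rw [← card_pencil X, ← Set.ncard_coe_finset]
  congr
  ext
  simp [mem_pencil]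

theorem ncard_setOf_PGmem_isSecant {ℓ : PGLine} {j : ℕ} (hj : (secantPts S ℓ).ncard ≠ j) :
    {m | PGmem X m ∧ IsSecant S j m}.ncard =
      #{m ∈ (pencil X).erase ℓ | (secantPts S m).ncard = j} := by
  rw [← Set.ncard_coe_finset]
  congr 1
  ext m
  simp only [Set.mem_ofPred_eq, coe_filter, mem_erase, mem_pencil]
  exact ⟨fun ⟨hX, hm⟩ => ⟨⟨fun h => hj (h ▸ hm), hX⟩, hm⟩,
    fun ⟨⟨_, hX⟩, hm⟩ => ⟨hX, hm⟩⟩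

theorem card_filter_tangent_pencil_erase {ℓ : PGLine} (hXℓ : PGmem X ℓ) (hX : X ∉ S) :
    #{m ∈ (pencil X).erase ℓ | (secantPts S m).ncard = 1} =
      {P | P ∈ S ∧ ¬ PGmem P ℓ ∧
        ∃ t : PGLine, PGmem P t ∧ IsTangent S t ∧ PGmem X t}.ncard := by
  set T := {m ∈ (pencil X).erase ℓ | (secantPts S m).ncard = 1}
  have hT : T ⊆ pencil X := (filter_subset _ _).trans (erase_subset _ _)
  have hunion : {P | P ∈ S ∧ ¬ PGmem P ℓ ∧
      ∃ t : PGLine, PGmem P t ∧ IsTangent S t ∧ PGmem X t} = ⋃ m ∈ T, secantPts S m := by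
    ext P
    rw [Set.mem_iUnion₂]
    simp only [T, mem_filter, mem_erase, mem_pencil, exists_prop]
    constructor
    · rintro ⟨hP, hPℓ, t, hPt, ht, hXt⟩
      exact ⟨t, ⟨⟨fun h => hPℓ (h ▸ hPt), hXt⟩, ht⟩, hP, hPt⟩
    · rintro ⟨m, ⟨⟨hmℓ, hXm⟩, hm⟩, hP, hPm⟩
      have hPX : P ≠ X := fun h => hX (h ▸ hP)
      exact ⟨hP, fun hPℓ => hmℓ (eq_of_PGmem_of_PGmem hPX hPm hXm hPℓ hXℓ),
        m, hPm, hm, hXm⟩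
  rw [hunion, ncard_biUnion_secantPts hX hT, card_eq_sum_ones]
  exact sum_congr rfl fun m hm => (mem_filter.1 hm).2.symm

theorem sum_pencil_erase_ncard_secantPts {ℓ : PGLine} (hXℓ : PGmem X ℓ) (hX : X ∉ S) :
    ∑ m ∈ (pencil X).erase ℓ, (secantPts S m).ncard + (secantPts S ℓ).ncard = S.ncard := by
  rw [sum_erase_add _ _ (mem_pencil.2 hXℓ), sum_pencil_ncard_secantPts hX]

theorem card_pencil_erase {ℓ : PGLine} (hXℓ : PGmem X ℓ) : #((pencil X).erase ℓ) = 11 := by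
  rw [card_erase_of_mem (mem_pencil.2 hXℓ), card_pencil]

end Counting

theorem line_structure_through_Q_and_R_general (S : Set PGPoint) (hS : IsBlockingSemioval S) (hcard : S.ncard = 25)
    (ℓ : PGLine) (hℓ : IsSecant S 10 ℓ)
    (Q R : PGPoint)
    (hQℓ : PGmem Q ℓ) (hRℓ : PGmem R ℓ) (hQS : Q ∉ S) (hRS : R ∉ S)
    (SQ : Set PGPoint)
    (hSQ : SQ = {P | P ∈ S ∧ ¬ PGmem P ℓ ∧ ∃ t : PGLine, PGmem P t ∧ IsTangent S t ∧ PGmem Q t})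
    (SR : Set PGPoint)
    (hSR : SR = {P | P ∈ S ∧ ¬ PGmem P ℓ ∧ ∃ t : PGLine, PGmem P t ∧ IsTangent S t ∧ PGmem R t})
    (hSQ8 : SQ.ncard = 8) (hSR7 : SR.ncard = 7) :
    ({m : PGLine | PGmem Q m}).ncard = 12 ∧
      (∀ m : PGLine, PGmem Q m →
        m = ℓ ∨ IsTangent S m ∨ IsSecant S 2 m ∨ IsSecant S 3 m) ∧
      ({m : PGLine | PGmem Q m ∧ IsTangent S m}).ncard = 8 ∧
      ({m : PGLine | PGmem Q m ∧ IsSecant S 2 m}).ncard = 2 ∧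
      ({m : PGLine | PGmem Q m ∧ IsSecant S 3 m}).ncard = 1 ∧
      ({m : PGLine | PGmem R m}).ncard = 12 ∧
      (∀ m : PGLine, PGmem R m → m = ℓ ∨ IsTangent S m ∨ IsSecant S 2 m) ∧
      ({m : PGLine | PGmem R m ∧ IsTangent S m}).ncard = 7 ∧
      ({m : PGLine | PGmem R m ∧ IsSecant S 2 m}).ncard = 4 := by
  have hpos := hS.1.one_le_ncard_secantPts
  have hQtan : #{m ∈ (pencil Q).erase ℓ | (secantPts S m).ncard = 1} = 8 :=
    hSQ8 ▸ hSQ ▸ card_filter_tangent_pencil_erase hQℓ hQS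
  have hRtan : #{m ∈ (pencil R).erase ℓ | (secantPts S m).ncard = 1} = 7 :=
    hSR7 ▸ hSR ▸ card_filter_tangent_pencil_erase hRℓ hRS
  have hQsum := sum_pencil_erase_ncard_secantPts (S := S) hQℓ hQS
  have hRsum := sum_pencil_erase_ncard_secantPts (S := S) hRℓ hRS
  have hQcard := card_pencil_erase hQℓ
  have hRcard := card_pencil_erase hRℓ
  unfold IsSecant at hℓ
  obtain ⟨hQle, hQ3, hQ12⟩ := profile_of_excess_le_one (s := (pencil Q).erase ℓ)
    (fun m _ => hpos m) (e := 1) (by omega) le_rfl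
  obtain ⟨hRle, -, hR12⟩ := profile_of_excess_le_one (s := (pencil R).erase ℓ)
    (fun m _ => hpos m) (e := 0) (by omega) zero_le_one
  refine ⟨ncard_setOf_PGmem Q, fun m hm => ?_, ?_, ?_, ?_,
    ncard_setOf_PGmem R, fun m hm => ?_, ?_, ?_⟩
  · refine (eq_or_ne m ℓ).imp_right fun h => ?_
    have := hQle m (mem_erase.2 ⟨h, mem_pencil.2 hm⟩)
    have := hpos m
    unfold IsTangent IsSecant
    omega
  · exact (ncard_setOf_PGmem_isSecant (by omega)).trans hQtan
  · exact (ncard_setOf_PGmem_isSecant (ℓ := ℓ) (j := 2) (by omega)).trans (by omega)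
  · exact (ncard_setOf_PGmem_isSecant (by omega)).trans hQ3
  · refine (eq_or_ne m ℓ).imp_right fun h => ?_
    have := hRle m (mem_erase.2 ⟨h, mem_pencil.2 hm⟩)
    have := hpos m
    unfold IsTangent IsSecant
    omega
  · exact (ncard_setOf_PGmem_isSecant (by omega)).trans hRtan
  · exact (ncard_setOf_PGmem_isSecant (ℓ := ℓ) (j := 2) (by omega)).trans (by omega)

theorem line_structure_through_Q_and_R (S : Set PGPoint) (hS : IsBlockingSemioval S) (hcard : S.ncard = 25)
    (ℓ : PGLine) (hℓ : IsSecant S 10 ℓ)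
    (Q R : PGPoint) (hQR : Q ≠ R)
    (hQℓ : PGmem Q ℓ) (hRℓ : PGmem R ℓ) (hQS : Q ∉ S) (hRS : R ∉ S)
    (SQ : Set PGPoint)
    (hSQ : SQ = {P | P ∈ S ∧ ¬ PGmem P ℓ ∧ ∃ t : PGLine, PGmem P t ∧ IsTangent S t ∧ PGmem Q t})
    (SR : Set PGPoint)
    (hSR : SR = {P | P ∈ S ∧ ¬ PGmem P ℓ ∧ ∃ t : PGLine, PGmem P t ∧ IsTangent S t ∧ PGmem R t})
    (hSQ8 : SQ.ncard = 8) (hSR7 : SR.ncard = 7) :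
    ({m : PGLine | PGmem Q m}).ncard = 12 ∧
      (∀ m : PGLine, PGmem Q m →
        m = ℓ ∨ IsTangent S m ∨ IsSecant S 2 m ∨ IsSecant S 3 m) ∧
      ({m : PGLine | PGmem Q m ∧ IsTangent S m}).ncard = 8 ∧
      ({m : PGLine | PGmem Q m ∧ IsSecant S 2 m}).ncard = 2 ∧
      ({m : PGLine | PGmem Q m ∧ IsSecant S 3 m}).ncard = 1 ∧
      ({m : PGLine | PGmem R m}).ncard = 12 ∧
      (∀ m : PGLine, PGmem R m → m = ℓ ∨ IsTangent S m ∨ IsSecant S 2 m) ∧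
      ({m : PGLine | PGmem R m ∧ IsTangent S m}).ncard = 7 ∧
      ({m : PGLine | PGmem R m ∧ IsSecant S 2 m}).ncard = 4 :=
  line_structure_through_Q_and_R_general S hS hcard ℓ hℓ Q R hQℓ hRℓ hQS hRS SQ hSQ SR hSR hSQ8 hSR7
end

section
/- Let S be a blocking semioval with exactly 25 points in PG(2,11) such that no line meets S in more than 6 points (in particular S has no 10-secant). Then no point of S lies on more than three 6-secants to S. -/
open Module

lemma dim2_of_ne {p q : Submodule (ZMod 11) (Fin 3 → ZMod 11)}
    (hp : finrank (ZMod 11) p = 1) (hq : finrank (ZMod 11) q = 1) (hne : p ≠ q) :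
    finrank (ZMod 11) ↥(p ⊔ q) = 2 := by
  have hbot : p ⊓ q = ⊥ := by
    by_contra h
    have h1 : finrank (ZMod 11) ↥(p ⊓ q) ≤ 1 := hp ▸ Submodule.finrank_mono inf_le_left
    have h0 : 0 < finrank (ZMod 11) ↥(p ⊓ q) := by
      rw [pos_iff_ne_zero, Ne, Submodule.finrank_eq_zero]
      exact h
    have h11 : finrank (ZMod 11) ↥(p ⊓ q) = 1 := le_antisymm h1 h0
    have e1 : p ⊓ q = p := Submodule.eq_of_le_of_finrank_eq inf_le_left (h11.trans hp.symm)
    have e2 : p ⊓ q = q := Submodule.eq_of_le_of_finrank_eq inf_le_right (h11.trans hq.symm)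
    exact hne (e1 ▸ e2)
  have := Submodule.finrank_sup_add_finrank_inf_eq p q
  rw [hbot, hp, hq] at this
  simpa using this

/-- The unique line through two distinct points. -/
lemma existsUnique_line {P Q : PGPoint} (hne : P ≠ Q) :
    ∃! L : PGLine, PGmem P L ∧ PGmem Q L := by
  have hpq : P.submodule ≠ Q.submodule := fun h => hne (Projectivization.submodule_injective h)
  have h2 : finrank (ZMod 11) ↥(P.submodule ⊔ Q.submodule) = 2 :=
    dim2_of_ne P.finrank_submodule Q.finrank_submodule hpq
  refine ⟨⟨_, h2⟩, ⟨le_sup_left, le_sup_right⟩, ?_⟩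
  rintro ⟨L, hL⟩ ⟨h1, h2'⟩
  refine Subtype.ext ?_
  exact (Submodule.eq_of_le_of_finrank_eq (sup_le h1 h2') (by rw [h2, hL])).symm

/-- Number of lines through a point is 12. -/
lemma card_lines_through (P : PGPoint) : Nat.card {L : PGLine // PGmem P L} = 12 := by
  classical
  set p := P.submodule with hpdef
  have hp1 : finrank (ZMod 11) p = 1 := P.finrank_submodule
  have hdim : ∀ v : {v : Fin 3 → ZMod 11 // v ∉ p},
      finrank (ZMod 11) ↥(p ⊔ Submodule.span (ZMod 11) {v.1}) = 2 := by
    intro v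
    refine dim2_of_ne hp1 (finrank_span_singleton ?_) ?_
    · intro h
      exact v.2 (by rw [h]; exact zero_mem p)
    · intro h
      exact v.2 (h.ge (Submodule.mem_span_singleton_self v.1))
  let g : {v : Fin 3 → ZMod 11 // v ∉ p} → {L : PGLine // PGmem P L} := fun v =>
    ⟨⟨p ⊔ Submodule.span (ZMod 11) {v.1}, hdim v⟩, le_sup_left⟩
  have hfiber : ∀ (v : {v : Fin 3 → ZMod 11 // v ∉ p}) (L : {L : PGLine // PGmem P L}),
      g v = L ↔ v.1 ∈ L.1.1 := by
    intro v L
    constructor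
    · rintro rfl
      exact Submodule.mem_sup_right (Submodule.mem_span_singleton_self v.1)
    · intro hv
      refine Subtype.ext (Subtype.ext ?_)
      refine Submodule.eq_of_le_of_finrank_eq
        (sup_le L.2 ((Submodule.span_singleton_le_iff_mem _ _).mpr hv)) ?_
      rw [hdim v, L.1.2]
  -- cardinalities
  have hcardV : Fintype.card (Fin 3 → ZMod 11) = 11 ^ 3 := by
    rw [card_eq_pow_finrank (K := ZMod 11)]
    · norm_num [Module.finrank_pi, ZMod.card]
  have hcardsub : ∀ (W : Submodule (ZMod 11) (Fin 3 → ZMod 11)) (I : Fintype ↥W),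
      @Fintype.card ↥W I = 11 ^ (finrank (ZMod 11) W) := by
    intro W I
    rw [Fintype.card_congr (Equiv.refl ↥W), card_eq_pow_finrank (K := ZMod 11), ZMod.card]
  have hcardD : Fintype.card {v : Fin 3 → ZMod 11 // v ∉ p} = 1320 := by
    rw [Fintype.card_subtype_compl, hcardV, hcardsub p _, hp1]; norm_num
  -- fibers have 110 elements
  have hfibcard : ∀ L : {L : PGLine // PGmem P L},
      Fintype.card {v : {v : Fin 3 → ZMod 11 // v ∉ p} // g v = L} = 110 := by
    intro L
    have e1 : {v : {v : Fin 3 → ZMod 11 // v ∉ p} // g v = L}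
        ≃ {w : ↥(L.1.1) // w.1 ∉ p} :=
      { toFun := fun v => ⟨⟨v.1.1, (hfiber v.1 L).mp v.2⟩, v.1.2⟩
        invFun := fun w => ⟨⟨w.1.1, w.2⟩, (hfiber ⟨w.1.1, w.2⟩ L).mpr w.1.2⟩
        left_inv := fun v => by ext; rfl
        right_inv := fun w => by ext; rfl }
    rw [Fintype.card_congr e1, Fintype.card_subtype_compl]
    have hc1 : Fintype.card ↥(L.1.1) = 121 := by
      rw [hcardsub L.1.1 _, L.1.2]; norm_num
    have e2 : {w : ↥(L.1.1) // w.1 ∈ p} ≃ ↥p :=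
      { toFun := fun w => ⟨w.1.1, w.2⟩
        invFun := fun x => ⟨⟨x.1, L.2 x.2⟩, x.2⟩
        left_inv := fun w => by ext; rfl
        right_inv := fun x => by ext; rfl }
    rw [hc1, Fintype.card_congr e2, hcardsub p _, hp1]; norm_num
  -- put it together
  have := Fintype.ofFinite {L : PGLine // PGmem P L}
  have hsum : Fintype.card {v : Fin 3 → ZMod 11 // v ∉ p}
      = ∑ L : {L : PGLine // PGmem P L},
        Fintype.card {v : {v : Fin 3 → ZMod 11 // v ∉ p} // g v = L} := by
    rw [← Fintype.card_sigma, Fintype.card_congr (Equiv.sigmaFiberEquiv g)]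
  rw [hcardD] at hsum
  simp only [hfibcard, Finset.sum_const, Finset.card_univ, smul_eq_mul] at hsum
  rw [Nat.card_eq_fintype_card]
  omega


theorem at_most_three_6_secants_per_point (S : Set PGPoint) (hS : IsBlockingSemioval S) (hcard : S.ncard = 25)
    (hmax : ∀ L : PGLine, (secantPts S L).ncard ≤ 6)
    (P : PGPoint) (hP : P ∈ S) :
    ({L : PGLine | PGmem P L ∧ IsSecant S 6 L}).ncard ≤ 3 := by
  classical
  obtain ⟨⟨hblock, -⟩, hsemi⟩ := hS
  have hPGfin : Finite PGPoint := Quotient.finite _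
  have hLfin : Finite PGLine := Subtype.finite
  have := Fintype.ofFinite PGPoint
  have := Fintype.ofFinite PGLine
  set 𝓕 : Finset PGLine := Finset.univ.filter (fun L => PGmem P L) with h𝓕
  have h𝓕mem : ∀ L : PGLine, L ∈ 𝓕 ↔ PGmem P L := by
    intro L; simp [h𝓕]
  have h𝓕card : 𝓕.card = 12 := by
    have := card_lines_through P
    rw [Nat.card_eq_fintype_card, Fintype.card_subtype] at this
    exact this
  -- finsets of secant points
  set fsec : PGLine → Finset PGPoint := fun L => (Set.toFinite (secantPts S L)).toFinset
    with hfsec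
  have hfsec_mem : ∀ (L : PGLine) (Q : PGPoint), Q ∈ fsec L ↔ Q ∈ S ∧ PGmem Q L := by
    intro L Q
    simp [hfsec, Set.Finite.mem_toFinset, secantPts]
  have hfsec_card : ∀ L : PGLine, (fsec L).card = (secantPts S L).ncard := by
    intro L
    exact (Set.ncard_eq_toFinset_card _ _).symm
  -- tangent line at P
  obtain ⟨L₀, ⟨hL₀mem, hL₀tan⟩, huniq⟩ := hsemi P hP
  have hL₀𝓕 : L₀ ∈ 𝓕 := (h𝓕mem L₀).mpr hL₀mem
  -- the partition of S \ {P}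
  set m : PGLine → ℕ := fun L => ((fsec L).erase P).card with hm
  have hsplit : ∑ L ∈ 𝓕, m L = 24 := by
    have hbiU : ((Set.toFinite S).toFinset).erase P = 𝓕.biUnion (fun L => (fsec L).erase P) := by
      ext Q
      simp only [Finset.mem_erase, Set.Finite.mem_toFinset, Finset.mem_biUnion]
      constructor
      · rintro ⟨hQP, hQS⟩
        obtain ⟨L, ⟨hPL, hQL⟩, -⟩ := existsUnique_line (Ne.symm hQP)
        exact ⟨L, (h𝓕mem L).mpr hPL, hQP, (hfsec_mem L Q).mpr ⟨hQS, hQL⟩⟩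
      · rintro ⟨L, -, hQP, hQ2⟩
        exact ⟨hQP, ((hfsec_mem L Q).mp hQ2).1⟩
    have hdisj : ∀ L ∈ 𝓕, ∀ L' ∈ 𝓕, L ≠ L' →
        Disjoint ((fsec L).erase P) ((fsec L').erase P) := by
      intro L hL L' hL' hne
      rw [Finset.disjoint_left]
      intro Q hQ hQ'
      obtain ⟨hQP, hQ2⟩ := Finset.mem_erase.mp hQ
      obtain ⟨-, hQ2'⟩ := Finset.mem_erase.mp hQ'
      exact hne ((existsUnique_line (Ne.symm hQP)).unique
        ⟨(h𝓕mem L).mp hL, ((hfsec_mem L Q).mp hQ2).2⟩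
        ⟨(h𝓕mem L').mp hL', ((hfsec_mem L' Q).mp hQ2').2⟩)
    have := Finset.card_biUnion hdisj
    rw [← hbiU, Finset.card_erase_of_mem (by simpa using hP)] at this
    have hfS : (Set.toFinite S).toFinset.card = 25 := by
      rw [← Set.ncard_eq_toFinset_card _ _]; exact hcard
    rw [hfS] at this
    have h24 : ∑ L ∈ 𝓕, ((fsec L).erase P).card = 24 := by omega
    exact h24
  -- values of m
  have hmP : ∀ L ∈ 𝓕, m L = (secantPts S L).ncard - 1 := by
    intro L hL
    show ((fsec L).erase P).card = (secantPts S L).ncard - 1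
    rw [Finset.card_erase_of_mem ((hfsec_mem L P).mpr ⟨hP, (h𝓕mem L).mp hL⟩), hfsec_card]
  have hm0 : m L₀ = 0 := by
    rw [hmP L₀ hL₀𝓕, hL₀tan]
  have hm1 : ∀ L ∈ 𝓕, L ≠ L₀ → 1 ≤ m L := by
    intro L hL hne
    have h1 : 1 ≤ (secantPts S L).ncard := (Set.ncard_pos (Set.toFinite _)).mpr (hblock L)
    have h2 : (secantPts S L).ncard ≠ 1 := by
      intro h
      exact hne (huniq L ⟨(h𝓕mem L).mp hL, h⟩)
    rw [hmP L hL]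
    omega
  -- the set of 6-secants through P
  set T : Finset PGLine := 𝓕.filter (fun L => IsSecant S 6 L) with hT
  have hgoal : ({L : PGLine | PGmem P L ∧ IsSecant S 6 L}).ncard = T.card := by
    rw [← Set.ncard_coe_finset]
    congr 1
    ext L
    simp [hT, h𝓕]
  rw [hgoal]
  by_contra hk
  push_neg at hk
  obtain ⟨T', hT'sub, hT'card⟩ := Finset.exists_subset_card_eq (show 4 ≤ T.card from hk)
  have hT'𝓕 : T' ⊆ 𝓕 := hT'sub.trans (Finset.filter_subset _ _)
  have hL₀T' : L₀ ∉ T' := by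
    intro h
    have := (Finset.mem_filter.mp (hT'sub h)).2
    rw [IsSecant] at this
    rw [IsTangent, IsSecant] at hL₀tan
    omega
  set A : Finset PGLine := insert L₀ T' with hA
  have hA𝓕 : A ⊆ 𝓕 := by
    intro L hL
    rcases Finset.mem_insert.mp hL with rfl | h
    · exact hL₀𝓕
    · exact hT'𝓕 h
  have hAcard : A.card = 5 := by
    rw [hA, Finset.card_insert_of_notMem hL₀T', hT'card]
  have hsum_split : ∑ L ∈ 𝓕 \ A, m L + ∑ L ∈ A, m L = ∑ L ∈ 𝓕, m L :=
    Finset.sum_sdiff hA𝓕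
  have hsumA : ∑ L ∈ A, m L = 20 := by
    rw [hA, Finset.sum_insert hL₀T', hm0]
    have : ∀ L ∈ T', m L = 5 := by
      intro L hL
      have h6 := (Finset.mem_filter.mp (hT'sub hL)).2
      rw [IsSecant] at h6
      rw [hmP L (hT'𝓕 hL), h6]
    rw [Finset.sum_congr rfl this, Finset.sum_const, hT'card]
    norm_num
  have hsum_rest : 7 ≤ ∑ L ∈ 𝓕 \ A, m L := by
    have hcard : (𝓕 \ A).card = 7 := by
      rw [Finset.card_sdiff_of_subset hA𝓕, h𝓕card, hAcard]
    calc 7 = (𝓕 \ A).card * 1 := by rw [hcard]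
    _ ≤ ∑ L ∈ 𝓕 \ A, m L := by
        have hpt : ∀ L ∈ 𝓕 \ A, 1 ≤ m L := by
          intro L hL
          obtain ⟨hL𝓕, hLA⟩ := Finset.mem_sdiff.mp hL
          exact hm1 L hL𝓕 (fun h => hLA (h ▸ Finset.mem_insert_self L₀ T'))
        have := Finset.card_nsmul_le_sum (𝓕 \ A) m 1 hpt
        simpa using this
  omega
end
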